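/- (Proposition: safety of generalise_Δ.) For every division Δ, the generalisation operation generalise_Δ is safe wrt Δ: for every finite set S of atoms that is safe wrt Δ, the set generalise_Δ(S) is also safe wrt Δ. -/
import Mathlib


/-- First-order terms over countably infinite sets of variables (ℕ)
and function symbols (ℕ). -/
inductive Term : Type where
  | var : ℕ → Term
  | app : ℕ → List Term → Term

namespace Term

/-- Applying a substitution (a mapping from variables to terms) homomorphically. -/
def subst (θ : ℕ → Term) : Term → Term
  | var v => θ v
  | app f ts => app f (ts.attach.map (fun x => x.1.subst θ))
decreasing_by
  have := List.sizeOf_lt_of_mem x.2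
  simp only [Term.app.sizeOf_spec]
  omega

/-- A term is ground if it contains no variables. -/
inductive Ground : Term → Prop where
  | app : ∀ f ts, (∀ t ∈ ts, Ground t) → Ground (app f ts)

/-- The variable `v` occurs in the term. -/
inductive Occurs (v : ℕ) : Term → Prop where
  | var : Occurs v (var v)
  | app : ∀ f ts t, t ∈ ts → Occurs v t → Occurs v (app f ts)

/-- `s` is an instance of `t` if `s = tθ` for some substitution `θ`. -/
def IsInstanceOf (s t : Term) : Prop := ∃ θ : ℕ → Term, t.subst θ = s

/-- Two terms are variants if each is an instance of the other. -/
def Variant (s t : Term) : Prop := s.IsInstanceOf t ∧ t.IsInstanceOf s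

end Term

/-- Types: type variables, the distinguished 0-ary constructors
`static`, `dynamic`, `nonvar`, and other constructors applied to types. -/
inductive Ty : Type where
  | var : ℕ → Ty
  | static : Ty
  | dynamic : Ty
  | nonvar : Ty
  | con : ℕ → List Ty → Ty

namespace Ty

/-- Applying a type substitution. -/
def subst (σ : ℕ → Ty) : Ty → Ty
  | var v => σ v
  | static => static
  | dynamic => dynamic
  | nonvar => nonvar
  | con c args => con c (args.attach.map (fun x => x.1.subst σ))
decreasing_by
  have := List.sizeOf_lt_of_mem x.2
  simp only [Ty.con.sizeOf_spec]
  omega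

/-- A type is ground if it contains no type variables. -/
inductive Ground : Ty → Prop where
  | static : Ground static
  | dynamic : Ground dynamic
  | nonvar : Ground nonvar
  | con : ∀ c args, (∀ τ ∈ args, Ground τ) → Ground (con c args)

/-- All type variables of the type are below `n`. -/
inductive VarsBelow (n : ℕ) : Ty → Prop where
  | var : ∀ v, v < n → VarsBelow n (var v)
  | static : VarsBelow n static
  | dynamic : VarsBelow n dynamic
  | nonvar : VarsBelow n nonvar
  | con : ∀ c args, (∀ τ ∈ args, VarsBelow n τ) → VarsBelow n (con c args)

end Ty

/-- A type definition `c(V₁,…,Vₙ) → f₁(T₁¹,…) ; … ; f_k(T_k¹,…)` for an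
`n`-ary type constructor: the variables are represented by `0,…,arity-1`,
the alternatives are pairs of a function symbol and the list of argument types;
the function symbols are distinct and the argument types only use
variables among `0,…,arity-1`. -/
structure TypeDef where
  arity : ℕ
  alts : List (ℕ × List Ty)
  alts_nonempty : alts ≠ []
  alts_nodup : (alts.map Prod.fst).Nodup
  vars_bound : ∀ p ∈ alts, ∀ τ ∈ p.2, Ty.VarsBelow arity τ

/-- A type system: exactly one type definition for every type constructor
other than `static`, `dynamic` and `nonvar`. -/
structure TypeSystem where
  defs : ℕ → TypeDef

mutual
/-- The type judgement `t : τ` relative to the type system `Γ`. -/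
inductive HasType (Γ : TypeSystem) : Term → Ty → Prop where
  | dyn (t : Term) : HasType Γ t .dynamic
  | stat (t : Term) : t.Ground → HasType Γ t .static
  | nv (f : ℕ) (ts : List Term) : HasType Γ (.app f ts) .nonvar
  | con (c : ℕ) (σ : ℕ → Ty) (f : ℕ) (Ts : List Ty) (ts : List Term)
      (hσ : ∀ v, (σ v).Ground)
      (hmem : (f, Ts) ∈ (Γ.defs c).alts)
      (hargs : HasTypeArgs Γ ts (Ts.map (Ty.subst σ))) :
      HasType Γ (.app f ts) (.con c ((List.range (Γ.defs c).arity).map σ))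

/-- `HasTypeArgs Γ ts τs` : the terms `ts` pointwise have the types `τs`. -/
inductive HasTypeArgs (Γ : TypeSystem) : List Term → List Ty → Prop where
  | nil : HasTypeArgs Γ [] []
  | cons {t τ ts τs} : HasType Γ t τ → HasTypeArgs Γ ts τs →
      HasTypeArgs Γ (t :: ts) (τ :: τs)
end

/-- Atoms `p(t₁,…,tₙ)` over a countably infinite set of predicate symbols (ℕ). -/
structure Atom where
  pred : ℕ
  args : List Term

namespace Atom

/-- Substitutions apply to atoms argumentwise. -/
def subst (θ : ℕ → Term) (A : Atom) : Atom := ⟨A.pred, A.args.map (Term.subst θ)⟩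

/-- `B` is an instance of `A`. -/
def IsInstanceOf (B A : Atom) : Prop := ∃ θ : ℕ → Term, A.subst θ = B

/-- Two atoms are variants if each is an instance of the other. -/
def Variant (A B : Atom) : Prop := A.IsInstanceOf B ∧ B.IsInstanceOf A

end Atom

/-- A division: a set of expressions `p(τ₁,…,τₙ)` (represented as pairs of a
predicate symbol and a list of types), with all types ground and at most one
division per predicate. -/
def IsDivision (Δ : Set (ℕ × List Ty)) : Prop :=
  (∀ d ∈ Δ, ∀ τ ∈ d.2, τ.Ground) ∧
  (∀ d ∈ Δ, ∀ d' ∈ Δ, d.1 = d'.1 → d = d')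

/-- An atom `p(t₁,…,tₙ)` is safe wrt `Δ` iff there is `p(τ₁,…,τₙ) ∈ Δ`
with `tᵢ : τᵢ` for all `i`. -/
def SafeAtom (Γ : TypeSystem) (Δ : Set (ℕ × List Ty)) (A : Atom) : Prop :=
  ∃ τs : List Ty, (A.pred, τs) ∈ Δ ∧ HasTypeArgs Γ A.args τs

mutual
/-- `Gen Γ τ t s L`: `s` is a result of the partial generalisation mapping
`gen_τ(t)`, where `L` records (in order) the fresh variables chosen. -/
inductive Gen (Γ : TypeSystem) : Ty → Term → Term → List ℕ → Prop where
  | static (t : Term) : Gen Γ .static t t []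
  | dynamic (t : Term) (v : ℕ) : Gen Γ .dynamic t (.var v) [v]
  | nonvar (f : ℕ) (ts : List Term) (vs : List ℕ) (h : vs.length = ts.length) :
      Gen Γ .nonvar (.app f ts) (.app f (vs.map Term.var)) vs
  | con (c : ℕ) (σ : ℕ → Ty) (f : ℕ) (Ts : List Ty) (ts ss : List Term) (L : List ℕ)
      (hσ : ∀ v, (σ v).Ground)
      (hmem : (f, Ts) ∈ (Γ.defs c).alts)
      (hargs : GenArgs Γ (Ts.map (Ty.subst σ)) ts ss L) :
      Gen Γ (.con c ((List.range (Γ.defs c).arity).map σ)) (.app f ts) (.app f ss) L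

/-- Pointwise generalisation of a list of terms, collecting the fresh variables. -/
inductive GenArgs (Γ : TypeSystem) : List Ty → List Term → List Term → List ℕ → Prop where
  | nil : GenArgs Γ [] [] [] []
  | cons {τ t s L τs ts ss Ls} : Gen Γ τ t s L → GenArgs Γ τs ts ss Ls →
      GenArgs Γ (τ :: τs) (t :: ts) (s :: ss) (L ++ Ls)
end

/-- `GenAtom Γ Δ A B L`: `B` is a result of `gen_Δ(A)` with fresh variables `L`. -/
def GenAtom (Γ : TypeSystem) (Δ : Set (ℕ × List Ty)) (A B : Atom) (L : List ℕ) : Prop :=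
  B.pred = A.pred ∧
  ∃ τs : List Ty, (A.pred, τs) ∈ Δ ∧ HasTypeArgs Γ A.args τs ∧
    GenArgs Γ τs A.args B.args L

/-- Substitutions agreeing on all variables below `n` act identically on a
type whose variables are below `n`. -/
lemma Ty.subst_congr {n : ℕ} {σ σ' : ℕ → Ty} (h : ∀ v < n, σ v = σ' v) :
    ∀ {τ : Ty}, Ty.VarsBelow n τ → τ.subst σ = τ.subst σ' := by
  intro τ hτ
  induction hτ with
  | var v hv => simpa [Ty.subst] using h v hv
  | static => simp [Ty.subst]
  | dynamic => simp [Ty.subst]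
  | nonvar => simp [Ty.subst]
  | con c args hall ih =>
      simp only [Ty.subst]
      congr 1
      refine List.map_congr_left ?_
      rintro ⟨τ, hτmem⟩ _
      exact ih τ hτmem

/-- In a list of pairs with nodup first components, second components are
determined by the first. -/
lemma alts_snd_eq {l : List (ℕ × List Ty)} (hnd : (l.map Prod.fst).Nodup)
    {f : ℕ} {Ts Ts' : List Ty} (h1 : (f, Ts) ∈ l) (h2 : (f, Ts') ∈ l) : Ts = Ts' := by
  have := List.inj_on_of_nodup_map hnd h1 h2 rfl
  exact congrArg Prod.snd this

/-- Inversion for the typing judgement at a constructor type. -/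
lemma hasType_con_inv {Γ : TypeSystem} {f : ℕ} {ts : List Term} {c : ℕ} {as : List Ty}
    (h : HasType Γ (.app f ts) (.con c as)) :
    ∃ (σ : ℕ → Ty) (Ts : List Ty), (∀ v, (σ v).Ground) ∧ (f, Ts) ∈ (Γ.defs c).alts ∧
      HasTypeArgs Γ ts (Ts.map (Ty.subst σ)) ∧ as = (List.range (Γ.defs c).arity).map σ := by
  cases h with
  | con c σ f Ts ts hσ hmem hargs => exact ⟨σ, Ts, hσ, hmem, hargs, rfl⟩

/-- Generalisation preserves typing (argument-list version). -/
lemma genArgs_hasType (Γ : TypeSystem) :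
    ∀ {τs ts ss L}, GenArgs Γ τs ts ss L → HasTypeArgs Γ ts τs → HasTypeArgs Γ ss τs := by
  intro τs ts ss L h
  induction h using GenArgs.rec
    (motive_1 := fun τ t s _ _ => HasType Γ t τ → HasType Γ s τ) with
  | static t => assumption
  | dynamic t v => exact HasType.dyn _
  | nonvar f ts vs hlen => exact HasType.nv _ _
  | con c σ f Ts ts ss L hσ hmem hargs ih =>
      rename_i ht
      obtain ⟨σ', Ts', hσ', hmem', hargs', heq⟩ := hasType_con_inv ht
      have hσeq : ∀ v < (Γ.defs c).arity, σ' v = σ v := by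
        intro v hv
        exact ((List.map_inj_left).mp heq.symm v (List.mem_range.mpr hv))
      have hTs : Ts' = Ts := alts_snd_eq (Γ.defs c).alts_nodup hmem' hmem
      rw [hTs] at hargs'
      have hmapeq : Ts.map (Ty.subst σ') = Ts.map (Ty.subst σ) := by
        refine List.map_congr_left ?_
        intro τ hτ
        exact Ty.subst_congr hσeq ((Γ.defs c).vars_bound _ hmem τ hτ)
      rw [hmapeq] at hargs'
      exact HasType.con c σ f Ts ss hσ hmem (ih hargs')
  | nil => exact id
  | cons hgen hgens ih1 ih2 =>
      intro ht
      cases ht with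
      | cons h1 h2 => exact HasTypeArgs.cons (ih1 h1) (ih2 h2)

/-- **Safety of `generalise_Δ`.** For every division `Δ` and every finite set `S`
of atoms safe wrt `Δ`, the set `generalise_Δ(S)` (a minimal subset `S₁` of
`S₂ = { gen_Δ(s) | s ∈ S }` such that every element of `S₂` has a variant in
`S₁`) is also safe wrt `Δ`. -/
theorem generalise_safe (Γ : TypeSystem) (Δ : Set (ℕ × List Ty)) (hΔ : IsDivision Δ)
    (S : Set Atom) (hfin : S.Finite) (hsafe : ∀ A ∈ S, SafeAtom Γ Δ A)
    -- `g A` is a result of `gen_Δ(A)` (with distinct fresh variables not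
    -- occurring in `A`), for every `A ∈ S`
    (g : Atom → Atom)
    (hg : ∀ A ∈ S, ∃ L : List ℕ, GenAtom Γ Δ A (g A) L ∧ L.Nodup ∧
            ∀ v ∈ L, ∀ t ∈ A.args, ¬ Term.Occurs v t)
    -- `S₁` is a minimal subset of `S₂ = { gen_Δ(s) | s ∈ S }` such that every
    -- element of `S₂` has a variant in `S₁`
    (S₁ : Set Atom)
    (hsub : S₁ ⊆ g '' S)
    (hcover : ∀ B ∈ g '' S, ∃ B' ∈ S₁, B.Variant B')
    (hmin : ∀ S₀ ⊆ S₁, (∀ B ∈ g '' S, ∃ B' ∈ S₀, B.Variant B') → S₀ = S₁) :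
    ∀ B ∈ S₁, SafeAtom Γ Δ B := by
  intro B hB
  obtain ⟨A, hA, rfl⟩ := hsub hB
  obtain ⟨L, ⟨hpred, τs, hτs, hty, hgen⟩, -, -⟩ := hg A hA
  exact ⟨τs, by rw [hpred]; exact hτs, genArgs_hasType Γ hgen hty⟩
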